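/- Let D ≥ 3, k ≥ 2, and let G be a connected closed bipartite (D+1)-colored graph with 2k vertices. Suppose G contains a D-dipole: a black vertex i₀, a white vertex j₀ and a color c₀ such that σ_c i₀ = j₀ for every color c ≠ c₀ and σ_{c₀} i₀ ≠ j₀. Let G' be the contraction of this D-dipole. Then G' has 2(k−1) vertices, satisfies F(G') = F(G) − D(D−1)/2, its degree is unchanged, ω(G') = ω(G), and G' is connected. -/

import Mathlib

open scoped Classical

noncomputable section

/-- Number of cycles of a permutation of `Fin k`, counting fixed points
as cycles of length 1. -/
def numCycles {k : ℕ} (τ : Equiv.Perm (Fin k)) : ℕ :=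
  τ.cycleType.card + (Finset.univ.filter fun i => τ i = i).card

/-- `F^{c₁c₂}(G)`: the number of faces with colors `c₁c₂`, i.e. the number of
cycles of `(σ c₂)⁻¹ * σ c₁` (fixed points counting as cycles of length 1). -/
def faceCount (D k : ℕ) (σ : Fin (D + 1) → Equiv.Perm (Fin k)) (c₁ c₂ : Fin (D + 1)) : ℕ :=
  numCycles ((σ c₂)⁻¹ * σ c₁)

/-- `F(G)`: total number of faces. -/
def totalFaces (D k : ℕ) (σ : Fin (D + 1) → Equiv.Perm (Fin k)) : ℕ :=
  ∑ p ∈ Finset.univ.filter (fun p : Fin (D + 1) × Fin (D + 1) => p.1 < p.2),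
    faceCount D k σ p.1 p.2

/-- The degree `ω(G) := ((D−1)!/2) · (D + (D(D−1)/2)·k − F(G))`. -/
def degree (D k : ℕ) (σ : Fin (D + 1) → Equiv.Perm (Fin k)) : ℚ :=
  ((D - 1).factorial : ℚ) / 2 *
    ((D : ℚ) + (D : ℚ) * ((D : ℚ) - 1) / 2 * (k : ℚ) - (totalFaces D k σ : ℚ))

/-- `G` is connected: the subgroup generated by the `(σ c')⁻¹ * σ c` acts
transitively on `Fin k`. -/
def Connected (D k : ℕ) (σ : Fin (D + 1) → Equiv.Perm (Fin k)) : Prop :=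
  ∀ i j : Fin k, ∃ g ∈ Subgroup.closure
    {g : Equiv.Perm (Fin k) | ∃ c c' : Fin (D + 1), g = (σ c')⁻¹ * σ c}, g i = j

/-- A permutation of `Fin m` which is a single `m`-cycle. -/
def IsFullCycle {m : ℕ} (π : Equiv.Perm (Fin m)) : Prop :=
  π.IsCycle ∧ π.support = Finset.univ

/-- `Φ_π(G) := Σ_{q=0}^{D} F^{π^q(0), π^{q+1}(0)}(G)`, the face count of the
jacket associated to the `(D+1)`-cycle `π` on the colors. -/
def jacketFaces (D k : ℕ) (σ : Fin (D + 1) → Equiv.Perm (Fin k))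
    (π : Equiv.Perm (Fin (D + 1))) : ℕ :=
  ∑ q ∈ Finset.range (D + 1), faceCount D k σ ((π ^ q) 0) ((π ^ (q + 1)) 0)

/-- `g_π(G) := (2 + (D−1)·k − Φ_π(G))/2`, the genus of the jacket of `π`. -/
def jacketGenus (D k : ℕ) (σ : Fin (D + 1) → Equiv.Perm (Fin k))
    (π : Equiv.Perm (Fin (D + 1))) : ℚ :=
  (2 + ((D : ℚ) - 1) * (k : ℚ) - (jacketFaces D k σ π : ℚ)) / 2

/-- The number of cycles of length `s` of a permutation of `Fin k`
(fixed points counting as cycles of length 1). -/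
def numCyclesLen {k : ℕ} (τ : Equiv.Perm (Fin k)) (s : ℕ) : ℕ :=
  if s = 1 then (Finset.univ.filter fun i => τ i = i).card else τ.cycleType.count s

/-- `F_s(G)`: the number of faces of `G` with `2s` vertices. -/
def facesLen (D k : ℕ) (σ : Fin (D + 1) → Equiv.Perm (Fin k)) (s : ℕ) : ℕ :=
  ∑ p ∈ Finset.univ.filter (fun p : Fin (D + 1) × Fin (D + 1) => p.1 < p.2),
    numCyclesLen ((σ p.2)⁻¹ * σ p.1) s

/-!
Lift the contracted graph back to `Fin k` by letting `i₀` be a fixed point. The face permutation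
`τ = (σ c')⁻¹ * σ c` of `G` then becomes `swap i₀ (τ i₀) * τ`, which cuts `i₀` out of its cycle.
If `c, c' ≠ c₀`, then `i₀` is a fixed point of `τ` (one of the `D(D-1)/2` faces of length one
inside the dipole) and that face disappears; otherwise `i₀` only leaves a longer cycle, and the
number of faces does not change. For connectivity, a path of `G` through `i₀` can be rerouted in
`G'` through the black vertex `(σ c₀)⁻¹ j₀`: every neighbour of `i₀` either is that vertex or is
joined to it by a single step of `G'`.
-/

open Equiv Equiv.Perm Finset

theorem numCycles_eq_card_cycleType_add {k : ℕ} (g : Perm (Fin k)) :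
    numCycles g = Multiset.card g.cycleType + (k - #g.support) := by
  have hfix : ({i | g i = i} : Finset (Fin k)) = g.supportᶜ := by ext; simp
  rw [numCycles, hfix, card_compl, Fintype.card_fin]

theorem numCycles_one (k : ℕ) : numCycles (1 : Perm (Fin k)) = k := by
  simp [numCycles_eq_card_cycleType_add]

theorem Equiv.Perm.IsCycle.numCycles_add_card_support {k : ℕ} {g : Perm (Fin k)}
    (hg : g.IsCycle) : numCycles g + #g.support = k + 1 := by
  have := card_le_univ g.support
  rw [numCycles_eq_card_cycleType_add, hg.cycleType]
  simp only [Multiset.card_singleton, Fintype.card_fin] at *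
  omega

theorem Equiv.Perm.Disjoint.numCycles_mul {k : ℕ} {g h : Perm (Fin k)} (hgh : g.Disjoint h) :
    numCycles (g * h) + k = numCycles g + numCycles h := by
  have := card_le_univ (g.support ∪ h.support)
  rw [card_union_of_disjoint hgh.disjoint_support, Fintype.card_fin] at this
  simp only [numCycles_eq_card_cycleType_add, hgh.cycleType_mul, hgh.support_mul,
    card_union_of_disjoint hgh.disjoint_support, Multiset.card_add]
  omega

theorem Equiv.Perm.IsCycle.numCycles_swap_mul {k : ℕ} {g : Perm (Fin k)} (hg : g.IsCycle)
    {a : Fin k} (ha : g a ≠ a) : numCycles (swap a (g a) * g) = numCycles g + 1 := by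
  have hcard := hg.numCycles_add_card_support
  by_cases hga : g (g a) = a
  · have hswap : g = swap a (g a) := hg.eq_swap_of_apply_apply_eq_self ha hga
    have hone : swap a (g a) * g = 1 := (congrArg _ hswap).trans (swap_mul_self _ _)
    have htwo : #g.support = 2 := by rw [hswap, card_support_swap ha.symm]
    rw [hone, numCycles_one]
    omega
  · have hcard' := (hg.swap_mul ha hga).numCycles_add_card_support
    rw [support_swap_mul_eq g a hga, sdiff_singleton_eq_erase,
      card_erase_of_mem (mem_support.2 ha)] at hcard'
    have := hg.two_le_card_support
    omega

theorem numCycles_swap_mul {k : ℕ} {g : Perm (Fin k)} {a : Fin k} (ha : g a ≠ a) :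
    numCycles (swap a (g a) * g) = numCycles g + 1 := by
  set C := g.cycleOf a
  have hC : C.IsCycle := isCycle_cycleOf g ha
  have hCa : C a = g a := cycleOf_apply_self g a
  have hdisj : (g * C⁻¹).Disjoint C := disjoint_mul_inv_of_mem_cycleFactorsFinset
    (cycleOf_mem_cycleFactorsFinset_iff.2 (mem_support.2 ha))
  have hdisj' : (g * C⁻¹).Disjoint (swap a (C a) * C) :=
    hdisj.mono le_rfl fun x hx => (mem_support_swap_mul_imp_mem_support_ne hx).1
  have hsplit : swap a (g a) * g = (g * C⁻¹) * (swap a (C a) * C) := by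
    rw [hdisj'.commute.eq, mul_assoc, ← hdisj.commute.eq, inv_mul_cancel_right, hCa]
  have h1 := hdisj.numCycles_mul
  have h2 := hdisj'.numCycles_mul
  rw [inv_mul_cancel_right] at h1
  rw [← hsplit, hC.numCycles_swap_mul (hCa ▸ ha)] at h2
  omega

theorem numCycles_extendDomain {m k : ℕ} {p : Fin k → Prop} [DecidablePred p]
    (f : Fin m ≃ Subtype p) (g : Perm (Fin m)) :
    numCycles (g.extendDomain f) + m = numCycles g + k := by
  have hm : m ≤ k := by
    simpa using Fintype.card_le_of_embedding (f.toEmbedding.trans (Function.Embedding.subtype p))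
  have := card_le_univ g.support
  simp only [numCycles_eq_card_cycleType_add, cycleType_extendDomain, card_support_extend_domain,
    Fintype.card_fin] at *
  omega

theorem numCycles_eq_add_one_of_semiconj {k : ℕ} {g : Perm (Fin k)} {a : Fin k} (hga : g a = a)
    {e : Fin (k - 1) → Fin k} (he : Function.Injective e) (hea : ∀ i, e i ≠ a)
    {g' : Perm (Fin (k - 1))} (h : Function.Semiconj e g' g) :
    numCycles g = numCycles g' + 1 := by
  have hbij : Function.Bijective fun i => (⟨e i, hea i⟩ : {x // x ≠ a}) := by
    rw [Fintype.bijective_iff_injective_and_card]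
    exact ⟨fun i j hij => he (congrArg Subtype.val hij), by simp [Fintype.card_subtype_compl]⟩
  set f := Equiv.ofBijective _ hbij
  have hext : g'.extendDomain f = g := by
    refine Equiv.ext fun x => ?_
    by_cases hx : x = a
    · rw [extendDomain_apply_not_subtype g' f (not_not.2 hx), hx, hga]
    · obtain ⟨i, rfl⟩ : ∃ i, e i = x := (hbij.2 ⟨x, hx⟩).imp fun i hi => congrArg Subtype.val hi
      exact (extendDomain_apply_image g' f i).trans (h i)
  have hcard := numCycles_extendDomain f g'
  rw [hext] at hcard
  have := a.pos
  omega

theorem swap_mul_inv_mul_swap_mul {α : Type*} [DecidableEq α] {s t : Perm α} {a b : α}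
    (h : s a = b ∨ t a = b) :
    (swap b (t a) * t)⁻¹ * (swap b (s a) * s) = swap a ((t⁻¹ * s) a) * (t⁻¹ * s) := by
  rcases h with rfl | rfl
  · rw [swap_self, ← Perm.one_def, one_mul, mul_inv_rev, swap_inv, mul_swap_eq_swap_mul]
    simp [mul_assoc, swap_comm]
  · rw [swap_self, ← Perm.one_def, one_mul, ← mul_assoc, mul_swap_eq_swap_mul]
    simp [mul_assoc]

theorem Equiv.Perm.apply_mem_of_mem_closure {α : Type*} {S : Set (Perm α)} {T : Set α}
    (hS : ∀ s ∈ S, ∀ x ∈ T, s x ∈ T ∧ s⁻¹ x ∈ T) {g : Perm α} (hg : g ∈ Subgroup.closure S)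
    {x : α} (hx : x ∈ T) : g x ∈ T := by
  suffices ∀ x ∈ T, g x ∈ T ∧ g⁻¹ x ∈ T from (this x hx).1
  induction hg using Subgroup.closure_induction with
  | mem s hs => exact hS s hs
  | one => simp
  | mul g h _ _ hg hh => exact fun x hx => ⟨(hg _ (hh x hx).1).1, (hh _ (hg x hx).2).2⟩
  | inv g _ hg => exact fun x hx => by simpa [and_comm] using hg x hx

theorem card_filter_lt_and_ne_and_ne {α : Type*} [Fintype α] [LinearOrder α] (a : α) :
    #{p : α × α | p.1 < p.2 ∧ p.1 ≠ a ∧ p.2 ≠ a} = (Fintype.card α - 1).choose 2 := by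
  rw [← Finset.card_univ, ← card_erase_of_mem (mem_univ a), ← card_product_filter_lt]
  congr 1
  ext p
  simp [and_comm]

section Dipole

variable {D k : ℕ}

def facePerm (σ : Fin (D + 1) → Perm (Fin k)) (c c' : Fin (D + 1)) : Perm (Fin k) :=
  (σ c')⁻¹ * σ c

structure IsDipole (σ : Fin (D + 1) → Perm (Fin k)) (i₀ j₀ : Fin k) (c₀ : Fin (D + 1)) :
    Prop where
  apply_of_ne : ∀ c, c ≠ c₀ → σ c i₀ = j₀
  apply_ne : σ c₀ i₀ ≠ j₀

variable {σ : Fin (D + 1) → Perm (Fin k)} {i₀ j₀ : Fin k} {c₀ : Fin (D + 1)}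
  {σ' : Fin (D + 1) → Perm (Fin (k - 1))} {eb ew : Fin (k - 1) → Fin k}

namespace IsDipole

theorem facePerm_apply_self_eq_iff (hd : IsDipole σ i₀ j₀ c₀) {c c' : Fin (D + 1)}
    (hcc' : c ≠ c') : facePerm σ c c' i₀ = i₀ ↔ c ≠ c₀ ∧ c' ≠ c₀ := by
  rw [facePerm, Perm.mul_apply, Perm.inv_eq_iff_eq]
  by_cases hc : c = c₀ <;> by_cases hc' : c' = c₀
  · exact absurd (hc.trans hc'.symm) hcc'
  · simp [hc, hc', hd.apply_of_ne c' hc', hd.apply_ne]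
  · simp [hc, hc', hd.apply_of_ne c hc, Ne.symm hd.apply_ne]
  · simp [hc, hc', hd.apply_of_ne c hc, hd.apply_of_ne c' hc']

theorem facePerm_apply_self_or (hd : IsDipole σ i₀ j₀ c₀) (c c' : Fin (D + 1)) :
    facePerm σ c c' i₀ = i₀ ∨ facePerm σ c c' i₀ = (σ c₀)⁻¹ j₀ ∨
      facePerm σ c c' ((σ c₀)⁻¹ j₀) = i₀ := by
  simp only [facePerm, Perm.mul_apply, Perm.inv_eq_iff_eq]
  by_cases hc : c = c₀ <;> by_cases hc' : c' = c₀
  · simp [hc, hc']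
  · simp [hc, hd.apply_of_ne c' hc']
  · simp [hc', hd.apply_of_ne c hc]
  · simp [hd.apply_of_ne c hc, hd.apply_of_ne c' hc']

/-- The contraction in one formula; the transposition is trivial unless `c = c₀`. -/
theorem contract_apply (hd : IsDipole σ i₀ j₀ c₀) (hebi : ∀ i, eb i ≠ i₀)
    (hne : ∀ c : Fin (D + 1), c ≠ c₀ → ∀ i : Fin (k - 1), σ c (eb i) = ew (σ' c i))
    (hcon₁ : ∀ i : Fin (k - 1), eb i = (σ c₀)⁻¹ j₀ → ew (σ' c₀ i) = σ c₀ i₀)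
    (hcon₂ : ∀ i : Fin (k - 1), eb i ≠ (σ c₀)⁻¹ j₀ → ew (σ' c₀ i) = σ c₀ (eb i))
    (c : Fin (D + 1)) (i : Fin (k - 1)) :
    ew (σ' c i) = swap j₀ (σ c i₀) (σ c (eb i)) := by
  have hi : σ c (eb i) ≠ σ c i₀ := (σ c).injective.ne (hebi i)
  by_cases hc : c = c₀
  · subst hc
    by_cases hj : eb i = (σ c)⁻¹ j₀
    · rw [hcon₁ i hj, hj]
      simp
    · rw [hcon₂ i hj, swap_apply_of_ne_of_ne (fun h => hj (Perm.eq_inv_iff_eq.2 h)) hi]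
  · rw [← hne c hc i, hd.apply_of_ne c hc, swap_self, refl_apply]

theorem semiconj_contract (hd : IsDipole σ i₀ j₀ c₀)
    (hlift : ∀ c i, ew (σ' c i) = swap j₀ (σ c i₀) (σ c (eb i))) (c c' : Fin (D + 1)) :
    Function.Semiconj eb (facePerm σ' c c')
      ⇑(swap i₀ (facePerm σ c c' i₀) * facePerm σ c c') := by
  intro i
  show eb (facePerm σ' c c' i) = (swap i₀ (facePerm σ c c' i₀) * facePerm σ c c') (eb i)
  by_cases hcc' : c = c'
  · subst hcc'
    simp [facePerm]
  have hj : σ c i₀ = j₀ ∨ σ c' i₀ = j₀ := by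
    by_cases hc : c = c₀
    · exact Or.inr (hd.apply_of_ne c' fun h => hcc' (hc.trans h.symm))
    · exact Or.inl (hd.apply_of_ne c hc)
  have hlift_face : (swap j₀ (σ c' i₀) * σ c') (eb (facePerm σ' c c' i)) =
      (swap j₀ (σ c i₀) * σ c) (eb i) := by
    simp [← hlift, facePerm]
  rw [show facePerm σ c c' = (σ c')⁻¹ * σ c from rfl, ← swap_mul_inv_mul_swap_mul hj,
    Perm.mul_apply, ← hlift_face]
  simp

theorem faceCount_contract (hd : IsDipole σ i₀ j₀ c₀) (heb : Function.Injective eb)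
    (hebi : ∀ i, eb i ≠ i₀) (hlift : ∀ c i, ew (σ' c i) = swap j₀ (σ c i₀) (σ c (eb i)))
    {c c' : Fin (D + 1)} (hcc' : c ≠ c') :
    faceCount D k σ c c' = faceCount D (k - 1) σ' c c' + if c ≠ c₀ ∧ c' ≠ c₀ then 1 else 0 := by
  have h := numCycles_eq_add_one_of_semiconj (by rw [Perm.mul_apply, swap_apply_right])
    heb hebi (hd.semiconj_contract hlift c c')
  change numCycles (facePerm σ c c') = numCycles (facePerm σ' c c') + _
  split_ifs with hfix
  · rwa [(hd.facePerm_apply_self_eq_iff hcc').2 hfix, swap_self, ← Perm.one_def, one_mul] at h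
  · rw [numCycles_swap_mul (mt (hd.facePerm_apply_self_eq_iff hcc').1 hfix)] at h
    omega

theorem totalFaces_contract (hd : IsDipole σ i₀ j₀ c₀) (heb : Function.Injective eb)
    (hebi : ∀ i, eb i ≠ i₀) (hlift : ∀ c i, ew (σ' c i) = swap j₀ (σ c i₀) (σ c (eb i))) :
    totalFaces D k σ = totalFaces D (k - 1) σ' + D.choose 2 := by
  unfold totalFaces
  rw [sum_congr rfl fun p hp => hd.faceCount_contract heb hebi hlift (mem_filter.1 hp).2.ne,
    sum_add_distrib, sum_boole, filter_filter, card_filter_lt_and_ne_and_ne]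
  simp

theorem facePerm_mem_of_mem (hd : IsDipole σ i₀ j₀ c₀) {O : Set (Fin k)} (hO₀ : i₀ ∉ O)
    (hO : ∀ c c', ∀ x ∈ O, (swap i₀ (facePerm σ c c' i₀) * facePerm σ c c') x ∈ O)
    (c c' : Fin (D + 1)) {x : Fin k} (hx : x ∈ O ∨ x = i₀ ∧ (σ c₀)⁻¹ j₀ ∈ O) :
    facePerm σ c c' x ∈ O ∨ facePerm σ c c' x = i₀ ∧ (σ c₀)⁻¹ j₀ ∈ O := by
  have hP := hO c c'
  set τ := facePerm σ c c'
  rcases hx with hx | ⟨rfl, hpb⟩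
  · have hx₀ : x ≠ i₀ := fun h => hO₀ (h ▸ hx)
    by_cases hτx : τ x = i₀
    · refine Or.inr ⟨hτx, ?_⟩
      rcases hd.facePerm_apply_self_or c c' with h | h | h
      · exact absurd (τ.injective (hτx.trans h.symm)) hx₀
      · have := hP x hx
        rwa [Perm.mul_apply, hτx, swap_apply_left, h] at this
      · rwa [← τ.injective (hτx.trans h.symm)]
    · have := hP x hx
      rw [Perm.mul_apply, swap_apply_of_ne_of_ne hτx (τ.injective.ne hx₀)] at this
      exact Or.inl this
  · by_cases hτ : τ x = x
    · exact Or.inr ⟨hτ, hpb⟩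
    · left
      rcases hd.facePerm_apply_self_or c c' with h | h | h
      · exact absurd h hτ
      · rwa [h]
      · have := hP _ hpb
        rwa [Perm.mul_apply, h, swap_apply_left] at this

theorem connected_contract (hd : IsDipole σ i₀ j₀ c₀) (heb : Function.Injective eb)
    (hebi : ∀ i, eb i ≠ i₀) (hlift : ∀ c i, ew (σ' c i) = swap j₀ (σ c i₀) (σ c (eb i)))
    (hconn : Connected D k σ) : Connected D (k - 1) σ' := by
  intro i j
  set O : Set (Fin k) := {x | ∃ g ∈ Subgroup.closure
    {g : Perm (Fin (k - 1)) | ∃ c c' : Fin (D + 1), g = (σ' c')⁻¹ * σ' c}, eb (g i) = x}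
  have hO₀ : i₀ ∉ O := fun ⟨_, _, h⟩ => hebi _ h
  have hO : ∀ c c', ∀ x ∈ O, (swap i₀ (facePerm σ c c' i₀) * facePerm σ c c') x ∈ O := by
    rintro c c' _ ⟨g, hg, rfl⟩
    exact ⟨facePerm σ' c c' * g, Subgroup.mul_mem _ (Subgroup.subset_closure ⟨c, c', rfl⟩) hg,
      hd.semiconj_contract hlift c c' (g i)⟩
  obtain ⟨g, hg, hgij⟩ := hconn (eb i) (eb j)
  have hj : eb j ∈ {x | x ∈ O ∨ x = i₀ ∧ (σ c₀)⁻¹ j₀ ∈ O} := by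
    rw [← hgij]
    refine Perm.apply_mem_of_mem_closure ?_ hg (Or.inl ⟨1, Subgroup.one_mem _, rfl⟩)
    rintro _ ⟨c, c', rfl⟩ x hx
    refine ⟨hd.facePerm_mem_of_mem hO₀ hO c c' hx, ?_⟩
    rw [mul_inv_rev, inv_inv]
    exact hd.facePerm_mem_of_mem hO₀ hO c' c hx
  rcases hj with ⟨g', hg', hj⟩ | ⟨hj, -⟩
  · exact ⟨g', hg', heb hj⟩
  · exact absurd hj (hebi j)

end IsDipole

end Dipole

theorem degree_eq_of_totalFaces_eq {D k : ℕ} {σ : Fin (D + 1) → Perm (Fin k)}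
    {σ' : Fin (D + 1) → Perm (Fin (k - 1))} (hk : 0 < k)
    (h : totalFaces D k σ = totalFaces D (k - 1) σ' + D.choose 2) :
    degree D (k - 1) σ' = degree D k σ := by
  rw [degree, degree, h, Nat.cast_sub hk]
  push_cast [Nat.cast_choose_two]
  ring

/-- The black vertices of `G'` are relabelled into those of `G` other than `i₀` by `eb`, the white
ones into those other than `j₀` by `ew`. -/
theorem dipole_contraction_invariants_general (D k : ℕ)
    (σ : Fin (D + 1) → Equiv.Perm (Fin k)) (hconn : Connected D k σ)
    (i₀ j₀ : Fin k) (c₀ : Fin (D + 1))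
    (hdip : ∀ c : Fin (D + 1), c ≠ c₀ → σ c i₀ = j₀) (hc₀ : σ c₀ i₀ ≠ j₀)
    (σ' : Fin (D + 1) → Equiv.Perm (Fin (k - 1)))
    (eb ew : Fin (k - 1) → Fin k)
    (heb : Function.Injective eb) (hebi : ∀ i, eb i ≠ i₀)
    (hne : ∀ c : Fin (D + 1), c ≠ c₀ → ∀ i : Fin (k - 1), σ c (eb i) = ew (σ' c i))
    (hcon₁ : ∀ i : Fin (k - 1), eb i = (σ c₀)⁻¹ j₀ → ew (σ' c₀ i) = σ c₀ i₀)
    (hcon₂ : ∀ i : Fin (k - 1), eb i ≠ (σ c₀)⁻¹ j₀ → ew (σ' c₀ i) = σ c₀ (eb i)) :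
    totalFaces D k σ = totalFaces D (k - 1) σ' + D * (D - 1) / 2 ∧
    degree D (k - 1) σ' = degree D k σ ∧
    Connected D (k - 1) σ' := by
  have hd : IsDipole σ i₀ j₀ c₀ := ⟨hdip, hc₀⟩
  have hlift := hd.contract_apply hebi hne hcon₁ hcon₂
  have hfaces := hd.totalFaces_contract heb hebi hlift
  exact ⟨by rw [hfaces, Nat.choose_two_right], degree_eq_of_totalFaces_eq i₀.pos hfaces,
    hd.connected_contract heb hebi hlift hconn⟩

/-- Let `G` (encoded by `σ` on `Fin k`, `k ≥ 2`) be connected and contain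
a `D`-dipole: a black vertex `i₀`, a white vertex `j₀` and a color `c₀` with `σ c i₀ = j₀`
for all `c ≠ c₀` and `σ c₀ i₀ ≠ j₀`.  Let `G'` (encoded by `σ'` on `Fin (k−1)`, hence with
`2(k−1)` vertices) be the contraction of this `D`-dipole: the black vertices other than `i₀`
are relabeled via the injection `eb : Fin (k−1) → Fin k` avoiding `i₀`, the white vertices
other than `j₀` via the injection `ew` avoiding `j₀`; for `c ≠ c₀` the permutation `σ' c`
agrees with `σ c` under these relabelings, and `σ' c₀` sends the black vertex
`(σ c₀)⁻¹ j₀` to the white vertex `σ c₀ i₀` and agrees with `σ c₀` elsewhere.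
Then `F(G) = F(G') + D(D−1)/2`, `ω(G') = ω(G)`, and `G'` is connected. -/
theorem dipole_contraction_invariants (D k : ℕ) (hD : 3 ≤ D) (hk : 2 ≤ k)
    (σ : Fin (D + 1) → Equiv.Perm (Fin k)) (hconn : Connected D k σ)
    (i₀ j₀ : Fin k) (c₀ : Fin (D + 1))
    (hdip : ∀ c : Fin (D + 1), c ≠ c₀ → σ c i₀ = j₀) (hc₀ : σ c₀ i₀ ≠ j₀)
    (σ' : Fin (D + 1) → Equiv.Perm (Fin (k - 1)))
    (eb ew : Fin (k - 1) → Fin k)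
    (heb : Function.Injective eb) (hebi : ∀ i, eb i ≠ i₀)
    (hew : Function.Injective ew) (hewj : ∀ i, ew i ≠ j₀)
    (hne : ∀ c : Fin (D + 1), c ≠ c₀ → ∀ i : Fin (k - 1), σ c (eb i) = ew (σ' c i))
    (hcon₁ : ∀ i : Fin (k - 1), eb i = (σ c₀)⁻¹ j₀ → ew (σ' c₀ i) = σ c₀ i₀)
    (hcon₂ : ∀ i : Fin (k - 1), eb i ≠ (σ c₀)⁻¹ j₀ → ew (σ' c₀ i) = σ c₀ (eb i)) :
    totalFaces D k σ = totalFaces D (k - 1) σ' + D * (D - 1) / 2 ∧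
    degree D (k - 1) σ' = degree D k σ ∧
    Connected D (k - 1) σ' :=
  dipole_contraction_invariants_general D k σ hconn i₀ j₀ c₀ hdip hc₀ σ' eb ew heb hebi hne hcon₁
    hcon₂
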